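/- The Djrbashian coefficients c_j^{(k)} (with c_k^{(k)} = 1) satisfy, for each k ≥ 1, the linear system Σ_{j=0}^{k-1} c_j^{(k)} / Γ(αℓ + β - j) = -1 / Γ(αℓ + β - k) for every ℓ = 0, 1, …, k-1. -/

import Mathlib

/-- The Djrbashian coefficients `c_j^{(k)}`. -/
noncomputable def djcoef (α β : ℝ) : ℕ → ℕ → ℝ
  | 0, j => if j = 0 then 1 else 0
  | (k + 1), j =>
    if j = 0 then (1 - β - α * k) * djcoef α β k 0
    else if j = k + 1 then 1
    else djcoef α β k (j - 1) + (1 - β - α * k + j) * djcoef α β k j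

lemma djcoef_diag (α β : ℝ) (k : ℕ) : djcoef α β k k = 1 := by
  cases k with
  | zero => simp [djcoef]
  | succ n => simp [djcoef]

lemma djcoef_eq_zero (α β : ℝ) : ∀ k j : ℕ, k < j → djcoef α β k j = 0 := by
  intro k
  induction k with
  | zero => intro j hj; simp [djcoef]; omega
  | succ n ih =>
      intro j hj
      match j, hj with
      | (j+1), hj =>
        have h1 : ¬ (j + 1 = 0) := by omega
        have h2 : ¬ (j + 1 = n + 1) := by omega
        simp only [djcoef, if_neg h1, if_neg h2, Nat.add_sub_cancel]
        rw [ih j (by omega), ih (j+1) (by omega)]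
        ring

lemma djcoef_succ_succ (α β : ℝ) (k j : ℕ) (hj : j ≤ k) :
    djcoef α β (k+1) (j+1) =
      djcoef α β k j + (1 - β - α * k + (j+1 : ℕ)) * djcoef α β k (j+1) := by
  rcases eq_or_ne j k with rfl | h
  · rw [djcoef_diag α β (j+1), djcoef_diag α β j, djcoef_eq_zero α β j (j+1) (by omega)]
    ring
  · have h1 : ¬ (j + 1 = 0) := by omega
    have h2 : ¬ (j + 1 = k + 1) := by omega
    simp only [djcoef, if_neg h1, if_neg h2, Nat.add_sub_cancel]

lemma inv_gamma_eq (y : ℝ) : (Real.Gamma y)⁻¹ = y * (Real.Gamma (y+1))⁻¹ := by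
  rcases eq_or_ne y 0 with rfl | hy
  · simp [Real.Gamma_zero]
  · rw [Real.Gamma_add_one hy]
    rcases eq_or_ne (Real.Gamma y) 0 with h | h
    · simp [h]
    · field_simp

lemma djcoef_key (α β x : ℝ) (k : ℕ) :
    ∑ j ∈ Finset.range (k+1), djcoef α β k j * (Real.Gamma (x - j))⁻¹ =
      (∏ i ∈ Finset.range k, (x - β - α * i)) * (Real.Gamma x)⁻¹ := by
  induction k with
  | zero => simp [djcoef]
  | succ k ih =>
      set g : ℕ → ℝ := fun j => (Real.Gamma (x - j))⁻¹ with hg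
      have hstep : ∑ j ∈ Finset.range (k+2), djcoef α β (k+1) j * g j =
          (x - β - α * k) * ∑ j ∈ Finset.range (k+1), djcoef α β k j * g j := by
        have hgsucc : ∀ j : ℕ, g (j+1) = (x - j - 1) * g j := by
          intro j
          have : x - ((j : ℝ) + 1) = (x - j - 1) := by ring
          simp only [hg]
          push_cast
          rw [this, inv_gamma_eq (x - j - 1)]
          ring_nf
        rw [Finset.sum_range_succ' (fun j => djcoef α β (k+1) j * g j) (k+1)]
        have hterm : ∀ j ∈ Finset.range (k+1),
            djcoef α β (k+1) (j+1) * g (j+1) =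
              djcoef α β k j * g (j+1)
                + ((1 - β - α * k + ((j+1 : ℕ) : ℝ)) * djcoef α β k (j+1)) * g (j+1) := by
          intro j hj
          rw [djcoef_succ_succ α β k j (by simpa using Nat.lt_succ_iff.mp (Finset.mem_range.mp hj))]
          ring
        rw [Finset.sum_congr rfl hterm, Finset.sum_add_distrib]
        -- second sum: reindex
        have hsecond : ∑ j ∈ Finset.range (k+1),
            ((1 - β - α * k + ((j+1 : ℕ) : ℝ)) * djcoef α β k (j+1)) * g (j+1)
            = (∑ j ∈ Finset.range (k+1),
                (1 - β - α * k + (j : ℝ)) * djcoef α β k j * g j)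
              - (1 - β - α * k) * djcoef α β k 0 * g 0 := by
          have := Finset.sum_range_succ' (fun j => (1 - β - α * k + (j : ℝ)) * djcoef α β k j * g j) (k+1)
          have hlast : (1 - β - α * k + ((k+1 : ℕ) : ℝ)) * djcoef α β k (k+1) * g (k+1) = 0 := by
            rw [djcoef_eq_zero α β k (k+1) (by omega)]; ring
          rw [Finset.sum_range_succ (fun j => (1 - β - α * k + (j : ℝ)) * djcoef α β k j * g j) (k+1)] at this
          rw [hlast] at this
          push_cast at this ⊢
          linarith [this]
        rw [hsecond]
        have hzero : djcoef α β (k+1) 0 = (1 - β - α * k) * djcoef α β k 0 := by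
          simp [djcoef]
        rw [hzero]
        have hfirst : ∑ j ∈ Finset.range (k+1), djcoef α β k j * g (j+1)
            = ∑ j ∈ Finset.range (k+1), djcoef α β k j * ((x - j - 1) * g j) := by
          exact Finset.sum_congr rfl (fun j _ => by rw [hgsucc j])
        rw [hfirst]
        have hsum : ∑ j ∈ Finset.range (k+1),
            (djcoef α β k j * ((x - j - 1) * g j)
              + (1 - β - α * k + (j:ℝ)) * djcoef α β k j * g j)
            = (x - β - α * k) * ∑ j ∈ Finset.range (k+1), djcoef α β k j * g j := by
          rw [Finset.mul_sum]
          exact Finset.sum_congr rfl (fun j _ => by ring)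
        rw [Finset.sum_add_distrib] at hsum
        linarith [hsum]
      rw [hstep, ih, Finset.prod_range_succ]
      ring
/-- The Djrbashian coefficients solve the linear system
`∑_{j=0}^{k-1} c_j^{(k)} / Γ(αℓ+β-j) = -1/Γ(αℓ+β-k)` for `ℓ = 0,…,k-1`,
where `1/Γ` is the entire reciprocal Gamma function (here realized as `(Real.Gamma x)⁻¹`,
which vanishes at the nonpositive-integer poles of `Γ`). -/
theorem djcoef_linear_system (α β : ℝ) (hα : 0 < α) (k : ℕ) (hk : 1 ≤ k)
    (ℓ : ℕ) (hℓ : ℓ < k) :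
    ∑ j ∈ Finset.range k, djcoef α β k j * (Real.Gamma (α * ℓ + β - j))⁻¹ =
      -(Real.Gamma (α * ℓ + β - k))⁻¹ := by
  have h := djcoef_key α β (α * ℓ + β) k
  have hprod : (∏ i ∈ Finset.range k, (α * ℓ + β - β - α * i)) = 0 := by
    apply Finset.prod_eq_zero (Finset.mem_range.mpr hℓ)
    ring
  rw [hprod, zero_mul, Finset.sum_range_succ, djcoef_diag] at h
  linarith [h]
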